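/- arXiv:2604.09133 — 5 statements merged into one kernel-verified Lean document; each statement's English description precedes it below -/
import Mathlib

section
/- Let (α_i) be a complex sequence in the unit sphere of the dual of c (so ∑_{i=1}^∞ |α_i| = 1, with the functional acting on c naturally via coordinates, ignoring the limit functional), and let Λ = {i : α_i = 0}. Then (α_i) attains its norm on the unit sphere of c if and only if either Λ^c is finite, or the sequence (conj(α_{i_k})/|α_{i_k}|)_{k} is convergent, where α_{i_1}, α_{i_2}, ... enumerates the nonzero entries of (α_i) in increasing order of index. -/
/-! If `‖γ‖∞ ≤ 1`, then `Re (αᵢγᵢ) ≤ |αᵢ|` for every `i`, so `∑ αᵢγᵢ = ∑ |αᵢ|` forces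
`αᵢγᵢ = |αᵢ|`, i.e. `γᵢ = conj αᵢ / |αᵢ|`, at every `i` outside `Λ`; the coordinates in `Λ` are
free. Hence a norming `γ ∈ c` exists iff the signs `conj αᵢ / |αᵢ|` along `Λᶜ` converge (or `Λᶜ`
is finite), and then filling `Λ` with their limit gives one. -/

open Filter Topology ComplexConjugate

section RCLike

variable {𝕜 : Type*} [RCLike 𝕜]

lemma RCLike.mul_conj_div_norm (a : 𝕜) : a * (conj a / ‖a‖) = ‖a‖ := by
  rw [mul_div_assoc', RCLike.mul_conj, sq, mul_self_div_self]

lemma RCLike.norm_conj_div_norm {a : 𝕜} (ha : a ≠ 0) : ‖conj a / (‖a‖ : 𝕜)‖ = 1 := by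
  simp [ha]

lemma RCLike.eq_conj_div_norm_of_re_mul_eq_norm {a γ : 𝕜} (ha : a ≠ 0) (hγ : ‖γ‖ ≤ 1)
    (h : RCLike.re (a * γ) = ‖a‖) : γ = conj a / ‖a‖ := by
  have hle : ‖a * γ‖ ≤ RCLike.re (a * γ) :=
    h ▸ (norm_mul a γ).trans_le (mul_le_of_le_one_right (norm_nonneg a) hγ)
  have hnorm : ‖a * γ‖ = ‖a‖ := h ▸ hle.antisymm (RCLike.re_le_norm _)
  refine mul_left_cancel₀ ha ?_
  rw [RCLike.mul_conj_div_norm, ← hnorm]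
  exact RCLike.norm_le_re_iff_eq_norm.1 hle

end RCLike

theorem Summable.tsum_eq_tsum_iff_of_le {ι α : Type*} [AddCommGroup α] [PartialOrder α]
    [IsOrderedAddMonoid α] [TopologicalSpace α] [IsTopologicalAddGroup α]
    [OrderClosedTopology α] {f g : ι → α} (hf : Summable f) (hg : Summable g)
    (h : ∀ i, f i ≤ g i) : ∑' i, f i = ∑' i, g i ↔ ∀ i, f i = g i := by
  refine ⟨fun heq i => ?_, fun h' => tsum_congr h'⟩
  by_contra hne
  exact (hf.tsum_lt_tsum h ((h i).lt_of_ne hne) hg).ne heq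

theorem tsum_mul_eq_tsum_norm_iff {𝕜 ι : Type*} [RCLike 𝕜] {α γ : ι → 𝕜}
    (hα : Summable fun i => ‖α i‖) (hγ : ∀ i, ‖γ i‖ ≤ 1) :
    ∑' i, α i * γ i = ((∑' i, ‖α i‖ : ℝ) : 𝕜) ↔
      ∀ i, α i ≠ 0 → γ i = conj (α i) / ‖α i‖ := by
  have hbound : ∀ i, ‖α i * γ i‖ ≤ ‖α i‖ := fun i =>
    (norm_mul _ _).trans_le (mul_le_of_le_one_right (norm_nonneg _) (hγ i))
  have hle : ∀ i, RCLike.re (α i * γ i) ≤ ‖α i‖ := fun i => (RCLike.re_le_norm _).trans (hbound i)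
  have hαγ : Summable fun i => α i * γ i := hα.of_norm_bounded hbound
  constructor
  · intro heq i hi
    refine RCLike.eq_conj_div_norm_of_re_mul_eq_norm hi (hγ i) ?_
    refine ((RCLike.reCLM.summable hαγ).tsum_eq_tsum_iff_of_le hα hle).1 ?_ i
    have := congrArg RCLike.re heq
    rwa [RCLike.re_tsum _ hαγ, RCLike.ofReal_re] at this
  · intro h
    rw [RCLike.ofReal_tsum]
    refine tsum_congr fun i => ?_
    rcases eq_or_ne (α i) 0 with hi | hi
    · simp [hi]
    · rw [h i hi, RCLike.mul_conj_div_norm]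

theorem tendsto_inf_principal_of_tendsto_comp_nth {X : Type*} {p : ℕ → Prop} {f : ℕ → X}
    {l : Filter X} (h : {i | p i}.Finite ∨ Tendsto (fun k => f (Nat.nth p k)) atTop l) :
    Tendsto f (atTop ⊓ 𝓟 {i | p i}) l := by
  classical
  by_cases hp : {i | p i}.Finite
  · rw [inf_principal_eq_bot.2 (Nat.cofinite_eq_atTop ▸ hp.compl_mem_cofinite)]
    exact tendsto_bot
  have hcount : Tendsto (Nat.count p) atTop atTop :=
    tendsto_atTop_atTop.2 fun k => ⟨Nat.nth p k, fun i hi =>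
      Nat.count_nth_of_infinite hp k ▸ Nat.count_monotone p hi⟩
  refine ((h.resolve_left hp).comp (hcount.mono_left inf_le_left)).congr' ?_
  filter_upwards [inf_le_right (a := atTop) (mem_principal_self {i | p i})] with i hi
  exact congrArg f (Nat.nth_count hi)

section NormingSeq

variable {ι 𝕜 : Type*} [RCLike 𝕜] {α : ι → 𝕜} {L : 𝕜}

open Classical in
noncomputable def normingSeq (α : ι → 𝕜) (L : 𝕜) (i : ι) : 𝕜 :=
  if α i ≠ 0 then conj (α i) / ‖α i‖ else L

lemma normingSeq_of_ne_zero {i : ι} (hi : α i ≠ 0) :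
    normingSeq α L i = conj (α i) / ‖α i‖ :=
  if_pos hi

lemma norm_normingSeq_le (hL : ‖L‖ ≤ 1) (i : ι) : ‖normingSeq α L i‖ ≤ 1 := by
  by_cases hi : α i ≠ 0
  · rw [normingSeq_of_ne_zero hi, RCLike.norm_conj_div_norm hi]
  · rwa [normingSeq, if_neg hi]

lemma iSup_norm_normingSeq (hL : ‖L‖ ≤ 1) {i₀ : ι} (hi₀ : α i₀ ≠ 0) :
    ⨆ i, ‖normingSeq α L i‖ = 1 := by
  have : Nonempty ι := ⟨i₀⟩
  have hmax : IsGreatest (Set.range fun i => ‖normingSeq α L i‖) 1 :=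
    ⟨⟨i₀, by simp only [normingSeq_of_ne_zero hi₀, RCLike.norm_conj_div_norm hi₀]⟩,
      Set.forall_mem_range.2 (norm_normingSeq_le hL)⟩
  exact hmax.isLUB.ciSup_eq

lemma tendsto_normingSeq {α : ℕ → 𝕜} (h : {i | α i ≠ 0}.Finite ∨ Tendsto
      (fun k => conj (α (Nat.nth (fun i => α i ≠ 0) k)) / ‖α (Nat.nth (fun i => α i ≠ 0) k)‖)
      atTop (𝓝 L)) :
    Tendsto (normingSeq α L) atTop (𝓝 L) :=
  (tendsto_inf_principal_of_tendsto_comp_nth h).if (tendsto_inf_left tendsto_const_nhds)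

end NormingSeq

/-- **Norm attainment on `c`.**  Let `(αᵢ) ∈ ℓ¹(ℂ)` with `∑ |αᵢ| = 1`, acting on the space `c`
of convergent complex sequences (with sup norm) by `(γᵢ) ↦ ∑ αᵢ γᵢ`, and let
`Λ = {i | αᵢ = 0}`.  Then `(αᵢ)` attains its norm on the unit sphere of `c` iff either `Λᶜ`
is finite or the sequence `(conj α_{i_k}/|α_{i_k}|)_k` converges, where `i_1 < i_2 < ⋯`
enumerates the nonzero entries. -/
theorem c_dual_norm_attaining_iff
    (α : ℕ → ℂ) (hsum : Summable fun i => ‖α i‖) (hnorm : ∑' i, ‖α i‖ = 1) :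
    (∃ γ : ℕ → ℂ, (∃ L : ℂ, Tendsto γ atTop (𝓝 L)) ∧ (⨆ i, ‖γ i‖) = 1 ∧
        (∀ i, ‖γ i‖ ≤ 1) ∧ ∑' i, α i * γ i = 1) ↔
      ({i : ℕ | α i = 0}ᶜ.Finite ∨
        ∃ L : ℂ, Tendsto
          (fun k => conj (α (Nat.nth (fun i => α i ≠ 0) k)) /
            (‖α (Nat.nth (fun i => α i ≠ 0) k)‖ : ℂ)) atTop (𝓝 L)) := by
  have hattain : ∀ γ : ℕ → ℂ, (∀ i, ‖γ i‖ ≤ 1) →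
      (∑' i, α i * γ i = 1 ↔ ∀ i, α i ≠ 0 → γ i = conj (α i) / ‖α i‖) := fun γ hγ => by
    simpa [hnorm] using tsum_mul_eq_tsum_norm_iff hsum hγ
  constructor
  · rintro ⟨γ, ⟨L, hL⟩, -, hγ, hγα⟩
    refine or_iff_not_imp_left.2 fun hinf => ⟨L, ?_⟩
    refine (hL.comp (Nat.nth_strictMono hinf).tendsto_atTop).congr fun k => ?_
    exact (hattain γ hγ).1 hγα _ (Nat.nth_mem_of_infinite hinf k)
  · intro h
    obtain ⟨L, hL, hlim⟩ : ∃ L : ℂ, ‖L‖ ≤ 1 ∧ ({i | α i ≠ 0}.Finite ∨ Tendsto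
        (fun k => conj (α (Nat.nth (fun i => α i ≠ 0) k)) /
          (‖α (Nat.nth (fun i => α i ≠ 0) k)‖ : ℂ)) atTop (𝓝 L)) := by
      by_cases hfin : {i | α i ≠ 0}.Finite
      · exact ⟨1, norm_one.le, .inl hfin⟩
      · obtain ⟨L, hL⟩ := h.resolve_left hfin
        refine ⟨L, le_of_tendsto' hL.norm fun k => ?_, .inr hL⟩
        exact (RCLike.norm_conj_div_norm (Nat.nth_mem_of_infinite hfin k)).le
    obtain ⟨i₀, hi₀⟩ : ∃ i, α i ≠ 0 := by
      by_contra! h₀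
      simp [h₀] at hnorm
    exact ⟨normingSeq α L, ⟨L, tendsto_normingSeq hlim⟩, iSup_norm_normingSeq hL hi₀,
      norm_normingSeq_le hL, (hattain _ (norm_normingSeq_le hL)).2 fun _ => normingSeq_of_ne_zero⟩
end

section
/- Let X be a Banach space and x* an element of the unit sphere of X*. Then x* is a w*-w point of continuity of the unit ball of X* (i.e., the identity map from (X*_1, weak*) to (X*_1, weak) is continuous at x*) if and only if x* has a unique norm-preserving extension from X to X**, that is, the canonical image J_{X*}(x*) ∈ X*** is the unique functional Λ on X** with Λ restricted to (the canonical image of) X equal to x* and ‖Λ‖ = 1. -/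
open NormedSpace Filter Topology

namespace NormedSpace

/-- The topological dual of a seminormed space `E` (as `NormedSpace.Dual` was in the older Mathlib). -/
abbrev Dual (𝕜 : Type*) [NontriviallyNormedField 𝕜] (E : Type*) [SeminormedAddCommGroup E]
    [NormedSpace 𝕜 E] : Type _ := E →L[𝕜] 𝕜

end NormedSpace

/-- `x*` in the dual unit ball is a *w\*-w point of continuity*: every net (filter) in the
dual unit ball converging weak\* to `x*` converges weakly to `x*`. -/
def IsWStarWPC {E : Type*} [NormedAddCommGroup E] [NormedSpace ℝ E]
    (x : Dual ℝ E) : Prop :=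
  ∀ l : Filter (Dual ℝ E), l.NeBot → (∀ᶠ φ in l, ‖φ‖ ≤ 1) →
    (∀ v : E, Tendsto (fun φ : Dual ℝ E => φ v) l (𝓝 (x v))) →
    ∀ Λ : Dual ℝ (Dual ℝ E), Tendsto (fun φ : Dual ℝ E => Λ φ) l (𝓝 (Λ x))

/-!
If `x*` is a w*-w point of continuity and `Λ ∈ X***` is a norm-one extension of `x*`, Goldstine's
theorem (for the space `X*`) gives a net in the unit ball of `X*` converging to `Λ` pointwise on
`X**`. Testing on `X ⊆ X**` shows that the net converges weak* to `x*`, hence weakly, so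
`Λ = J_{X*}(x*)`.

Conversely, let a net in the unit ball of `X*` converge weak* to `x*`. By Banach–Alaoglu its image
in `X***` clusters weak*, and every cluster point is an extension of `x*` of norm at most
`1 = ‖x*‖`, hence of norm exactly one. Uniqueness makes `J_{X*}(x*)` the only cluster point, so the
net converges to it weak*, i.e. converges weakly to `x*`.
-/

open Metric

instance WeakDual.instLocallyConvexSpace {E : Type*} [AddCommGroup E] [Module ℝ E]
    [TopologicalSpace E] : LocallyConvexSpace ℝ (WeakDual ℝ E) :=
  WeakBilin.locallyConvexSpace (B := topDualPairing ℝ E)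

section Goldstine

variable {M : Type*} [NormedAddCommGroup M] [NormedSpace ℝ M]

theorem ContinuousLinearMap.norm_le_of_forall_apply_lt {φ : M →L[ℝ] ℝ} {u : ℝ}
    (h : ∀ m ∈ closedBall (0 : M) 1, φ m < u) : ‖φ‖ ≤ u := by
  have hu : 0 < u := by simpa using h 0 (mem_closedBall_self zero_le_one)
  refine φ.opNorm_le_of_unit_norm hu.le fun m hm => ?_
  have hm : ∀ s : ℝ, |s| ≤ 1 → s • m ∈ closedBall (0 : M) 1 := fun s hs => by
    simpa [norm_smul, hm] using hs
  have hneg := h _ (hm (-1) (by simp))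
  have hpos := h _ (hm 1 (by simp))
  simp only [neg_smul, one_smul, map_neg] at hneg hpos
  rw [Real.norm_eq_abs, abs_le]
  constructor <;> linarith

noncomputable def weakBidualEmbedding : M →ₗ[ℝ] WeakDual ℝ (Dual ℝ M) :=
  StrongDual.toWeakDual.toLinearMap ∘ₗ (inclusionInDoubleDual ℝ M).toLinearMap

/-- Goldstine's theorem. -/
theorem toWeakDual_mem_closure_weakBidualEmbedding_closedBall {Λ : Dual ℝ (Dual ℝ M)}
    (hΛ : ‖Λ‖ ≤ 1) :
    StrongDual.toWeakDual Λ ∈ closure (weakBidualEmbedding '' closedBall (0 : M) 1) := by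
  by_contra hΛK
  obtain ⟨f, u, hfK, huΛ⟩ := geometric_hahn_banach_closed_point
    ((convex_closedBall 0 1).linear_image _).closure isClosed_closure hΛK
  -- a weak*-continuous functional on `M**` is the evaluation at some `φ ∈ M*`
  obtain ⟨φ, rfl⟩ := LinearMap.dualEmbedding_surjective (topDualPairing ℝ (Dual ℝ M)) f
  have hφ : ‖φ‖ ≤ u :=
    φ.norm_le_of_forall_apply_lt fun m hm => hfK _ (subset_closure ⟨m, hm, rfl⟩)
  have hΛφ : Λ φ ≤ u := calc
    Λ φ ≤ ‖Λ‖ * ‖φ‖ := (le_abs_self _).trans (Λ.le_opNorm φ)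
    _ ≤ ‖φ‖ := mul_le_of_le_one_left (norm_nonneg φ) hΛ
    _ ≤ u := hφ
  exact (huΛ.trans_le hΛφ).false

theorem exists_filter_tendsto_apply_of_norm_le_one {Λ : Dual ℝ (Dual ℝ M)} (hΛ : ‖Λ‖ ≤ 1) :
    ∃ l : Filter M, l.NeBot ∧ (∀ᶠ m in l, ‖m‖ ≤ 1) ∧
      ∀ φ : Dual ℝ M, Tendsto (fun m => φ m) l (𝓝 (Λ φ)) := by
  refine ⟨comap weakBidualEmbedding (𝓝 (StrongDual.toWeakDual Λ)) ⊓ 𝓟 (closedBall 0 1),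
    ?_, ?_, fun φ => ?_⟩
  · have := mem_closure_iff_clusterPt.1 (toWeakDual_mem_closure_weakBidualEmbedding_closedBall hΛ)
    rw [ClusterPt, ← map_principal, ← Filter.push_pull'] at this
    exact this.of_map
  · exact mem_inf_of_right fun m hm => mem_closedBall_zero_iff.1 hm
  · exact ((WeakDual.eval_continuous φ).tendsto _).comp (tendsto_comap.mono_left inf_le_left)

end Goldstine

section ExtensionsToTheBidual

variable {E : Type*} [NormedAddCommGroup E] [NormedSpace ℝ E]

theorem norm_le_of_forall_apply_inclusionInDoubleDual {x : Dual ℝ E}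
    {Λ : Dual ℝ (Dual ℝ (Dual ℝ E))} (hext : ∀ v, Λ (inclusionInDoubleDual ℝ E v) = x v) :
    ‖x‖ ≤ ‖Λ‖ := by
  refine x.opNorm_le_bound (norm_nonneg Λ) fun v => ?_
  calc ‖x v‖ = ‖Λ (inclusionInDoubleDual ℝ E v)‖ := by rw [hext]
    _ ≤ ‖Λ‖ * ‖inclusionInDoubleDual ℝ E v‖ := Λ.le_opNorm _
    _ ≤ ‖Λ‖ * ‖v‖ := by gcongr; exact double_dual_bound ℝ E v

theorem IsWStarWPC.eq_inclusionInDoubleDual {x : Dual ℝ E} (hx : IsWStarWPC x)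
    {Λ : Dual ℝ (Dual ℝ (Dual ℝ E))} (hext : ∀ v, Λ (inclusionInDoubleDual ℝ E v) = x v)
    (hΛ : ‖Λ‖ ≤ 1) : Λ = inclusionInDoubleDual ℝ (Dual ℝ E) x := by
  obtain ⟨l, hl, hball, hlim⟩ := exists_filter_tendsto_apply_of_norm_le_one hΛ
  have hweak := hx l hl hball fun v => by simpa [hext] using hlim (inclusionInDoubleDual ℝ E v)
  ext F
  exact tendsto_nhds_unique (hlim F) (hweak F)

theorem isWStarWPC_of_forall_eq_inclusionInDoubleDual {x : Dual ℝ E}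
    (h : ∀ Λ : Dual ℝ (Dual ℝ (Dual ℝ E)), (∀ v, Λ (inclusionInDoubleDual ℝ E v) = x v) →
      ‖Λ‖ ≤ 1 → Λ = inclusionInDoubleDual ℝ (Dual ℝ E) x) :
    IsWStarWPC x := by
  intro l hl hball hlim F
  suffices Tendsto weakBidualEmbedding l (𝓝 (weakBidualEmbedding x)) from
    ((WeakDual.eval_continuous F).tendsto _).comp this
  refine (WeakDual.isCompact_closedBall 0 1).tendsto_nhds_of_unique_mapClusterPt ?_
    fun Λ hΛ hcluster => ?_
  · filter_upwards [hball] with φ hφ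
    exact mem_closedBall_zero_iff.2 ((double_dual_bound ℝ _ φ).trans hφ)
  · have hext : ∀ v, Λ (inclusionInDoubleDual ℝ E v) = x v := fun v =>
      eq_of_nhds_neBot <| (hcluster.continuousAt_comp
        (WeakDual.eval_continuous _).continuousAt).clusterPt.mono (hlim v)
    exact congrArg StrongDual.toWeakDual (h (WeakDual.toStrongDual Λ) hext (by simpa using hΛ))

end ExtensionsToTheBidual

theorem isWStarWPC_iff_unique_norm_preserving_extension_general
    {X : Type*} [NormedAddCommGroup X] [NormedSpace ℝ X]
    (x : Dual ℝ X) (hx : ‖x‖ = 1) :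
    IsWStarWPC x ↔
      (∃! Λ : Dual ℝ (Dual ℝ (Dual ℝ X)),
        (∀ v : X, Λ (inclusionInDoubleDual ℝ X v) = x v) ∧ ‖Λ‖ = 1) ∧
      ∀ Λ : Dual ℝ (Dual ℝ (Dual ℝ X)),
        (∀ v : X, Λ (inclusionInDoubleDual ℝ X v) = x v) → ‖Λ‖ = 1 →
          Λ = inclusionInDoubleDual ℝ (Dual ℝ X) x := by
  constructor
  · intro hPC
    have hJx : ‖inclusionInDoubleDual ℝ (Dual ℝ X) x‖ = 1 :=
      ((inclusionInDoubleDualLi ℝ).norm_map x).trans hx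
    exact ⟨⟨_, ⟨fun v => rfl, hJx⟩, fun Λ hΛ => hPC.eq_inclusionInDoubleDual hΛ.1 hΛ.2.le⟩,
      fun Λ hext hΛ => hPC.eq_inclusionInDoubleDual hext hΛ.le⟩
  · rintro ⟨-, hunique⟩
    refine isWStarWPC_of_forall_eq_inclusionInDoubleDual fun Λ hext hΛ => hunique Λ hext ?_
    exact le_antisymm hΛ (hx ▸ norm_le_of_forall_apply_inclusionInDoubleDual hext)

/-- **Unique extension characterization of w\*-w PCs.**  For `x* ∈ S(X*)`, `x*` is a w\*-w
point of continuity of the dual unit ball iff `x*` has a unique norm-preserving extension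
from `X` to `X**`, i.e. there is exactly one norm-one functional `Λ` on `X**` whose
restriction to (the canonical image of) `X` is `x*` (namely `J_{X*}(x*)`). -/
theorem isWStarWPC_iff_unique_norm_preserving_extension
    {X : Type*} [NormedAddCommGroup X] [NormedSpace ℝ X] [CompleteSpace X]
    (x : Dual ℝ X) (hx : ‖x‖ = 1) :
    IsWStarWPC x ↔
      (∃! Λ : Dual ℝ (Dual ℝ (Dual ℝ X)),
        (∀ v : X, Λ (inclusionInDoubleDual ℝ X v) = x v) ∧ ‖Λ‖ = 1) ∧
      ∀ Λ : Dual ℝ (Dual ℝ (Dual ℝ X)),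
        (∀ v : X, Λ (inclusionInDoubleDual ℝ X v) = x v) → ‖Λ‖ = 1 →
          Λ = inclusionInDoubleDual ℝ (Dual ℝ X) x :=
  isWStarWPC_iff_unique_norm_preserving_extension_general x hx
end

section
/- Let S be a nonempty set (viewed as a discrete topological space) and X a Banach space. Then c_0(S, X) is an M-ideal in ℓ^∞(S, X). -/
/-!
For `F ∈ ℓ^∞(S, X)*` let `F_s := F ∘ single s ∈ X*`. If `‖h‖ ≤ 1` and `h` vanishes on a finite set
`T`, then `∑_{s ∈ T} ‖F_s‖ + F h ≤ ‖F‖`: for `a ∉ T` and `‖x‖ ≤ 1` the function `h + single a x`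
still has norm `≤ 1`, so induction on `T` lets `x` range over the unit ball of `X` one coordinate
at a time. Hence `(‖F_s‖)` is summable and `P F g := ∑ F_s (g s)` is a contractive projection; it
agrees with `F` on `c₀(S, X)` because there `g = ∑ single s (g s)`. Taking for `h` a `g` set to
zero on `T` and letting `T` grow gives `∑ ‖F_s‖ + (F - P F) g ≤ ‖F‖`, so
`‖P F‖ + ‖F - P F‖ ≤ ‖F‖`.
-/
open Filter Topology
open scoped lp ENNReal

theorem ContinuousLinearMap.opNorm_le_of_forall_apply_le {E : Type*} [SeminormedAddCommGroup E]
    [NormedSpace ℝ E] {f : StrongDual ℝ E} {C : ℝ} (hf : ∀ x, ‖x‖ ≤ 1 → f x ≤ C) : ‖f‖ ≤ C := by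
  have hC : 0 ≤ C := by simpa using hf 0 (by simp)
  refine f.opNorm_le_of_unit_norm hC fun x hx => abs_le.2 ⟨?_, hf x hx.le⟩
  have := hf (-x) (by rw [norm_neg]; exact hx.le)
  rw [map_neg] at this
  linarith

namespace lp

variable {S X : Type*} [DecidableEq S] [NormedAddCommGroup X]

noncomputable def zeroOn (T : Finset S) (g : ℓ^∞(S, X)) : ℓ^∞(S, X) :=
  g - ∑ s ∈ T, lp.single ∞ s (g s)

theorem zeroOn_apply (T : Finset S) (g : ℓ^∞(S, X)) (t : S) :
    zeroOn T g t = if t ∈ T then 0 else g t := by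
  rw [zeroOn, lp.coeFn_sub, lp.coeFn_sum, Pi.sub_apply, Finset.sum_apply]
  simp only [lp.coeFn_single, Finset.sum_pi_single]
  split_ifs <;> simp

theorem norm_zeroOn_le (T : Finset S) (g : ℓ^∞(S, X)) : ‖zeroOn T g‖ ≤ ‖g‖ :=
  lp.norm_le_of_forall_le (norm_nonneg g) fun t => by
    rw [zeroOn_apply]
    split_ifs
    · simp
    · exact lp.norm_apply_le_norm ENNReal.top_ne_zero g t

theorem hasSum_single_of_finite_setOf_le_norm {g : ℓ^∞(S, X)}
    (hg : ∀ ε : ℝ, 0 < ε → {s : S | ε ≤ ‖g s‖}.Finite) :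
    HasSum (fun s => lp.single ∞ s (g s)) g := by
  refine Metric.tendsto_atTop.2 fun ε hε => ⟨(hg (ε / 2) (by positivity)).toFinset, fun T hT => ?_⟩
  rw [dist_comm, dist_eq_norm]
  calc ‖zeroOn T g‖ ≤ ε / 2 := lp.norm_le_of_forall_le (by positivity) fun t => ?_
    _ < ε := by linarith
  rw [zeroOn_apply]
  split_ifs with ht
  · simpa using (half_pos hε).le
  · by_contra! hlt
    exact ht (hT ((Set.Finite.mem_toFinset _).2 hlt.le))

theorem finite_setOf_le_norm_single (s : S) (x : X) (ε : ℝ) (hε : 0 < ε) :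
    {t : S | ε ≤ ‖(lp.single ∞ s x : ℓ^∞(S, X)) t‖}.Finite := by
  refine (Set.finite_singleton s).subset fun t ht => ?_
  by_contra hts
  simp [Pi.single_eq_of_ne (Set.mem_singleton_iff.not.1 hts)] at ht
  linarith

variable [NormedSpace ℝ X]

noncomputable def singleCLM (s : S) : X →L[ℝ] ℓ^∞(S, X) :=
  (lp.lsingle (𝕜 := ℝ) (E := fun _ : S => X) ∞ s).mkContinuous 1 fun x => by
    rw [one_mul]
    exact (lp.norm_single (E := fun _ : S => X) ENNReal.zero_lt_top s x).le

noncomputable def dualCoord (F : StrongDual ℝ ℓ^∞(S, X)) (s : S) : StrongDual ℝ X :=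
  F.comp (singleCLM s)

@[simp]
theorem dualCoord_apply (F : StrongDual ℝ ℓ^∞(S, X)) (s : S) (x : X) :
    dualCoord F s x = F (lp.single ∞ s x) := rfl

theorem apply_zeroOn (F : StrongDual ℝ ℓ^∞(S, X)) (T : Finset S) (g : ℓ^∞(S, X)) :
    F (zeroOn T g) = F g - ∑ s ∈ T, dualCoord F s (g s) := by
  simp [zeroOn, map_sum]

theorem sum_norm_dualCoord_add_apply_le (F : StrongDual ℝ ℓ^∞(S, X)) (T : Finset S)
    {h : ℓ^∞(S, X)} (hh : ‖h‖ ≤ 1) (hT : ∀ s ∈ T, h s = 0) :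
    ∑ s ∈ T, ‖dualCoord F s‖ + F h ≤ ‖F‖ := by
  induction T using Finset.induction_on generalizing h with
  | empty => simpa using (le_abs_self (F h)).trans (F.unit_le_opNorm h hh)
  | insert a T ha ih =>
    suffices ‖dualCoord F a‖ ≤ ‖F‖ - ∑ s ∈ T, ‖dualCoord F s‖ - F h by
      rw [Finset.sum_insert ha]; linarith
    refine ContinuousLinearMap.opNorm_le_of_forall_apply_le fun x hx => ?_
    have hnorm : ‖h + lp.single ∞ a x‖ ≤ 1 := by
      refine lp.norm_le_of_forall_le zero_le_one fun t => ?_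
      rcases eq_or_ne t a with rfl | hta
      · simpa [hT t (Finset.mem_insert_self t T)] using hx
      · simpa [Pi.single_eq_of_ne hta] using
          (lp.norm_apply_le_norm ENNReal.top_ne_zero h t).trans hh
    have hvanish : ∀ s ∈ T, (h + lp.single ∞ a x : ℓ^∞(S, X)) s = 0 := fun s hs => by
      have hsa : s ≠ a := ne_of_mem_of_not_mem hs ha
      simp [hT s (Finset.mem_insert_of_mem hs), Pi.single_eq_of_ne hsa]
    have := ih hnorm hvanish
    rw [map_add] at this
    simp only [dualCoord_apply]
    linarith

theorem sum_norm_dualCoord_le (F : StrongDual ℝ ℓ^∞(S, X)) (T : Finset S) :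
    ∑ s ∈ T, ‖dualCoord F s‖ ≤ ‖F‖ := by
  simpa using sum_norm_dualCoord_add_apply_le F T (h := 0) (by simp) fun _ _ => rfl

theorem summable_norm_dualCoord (F : StrongDual ℝ ℓ^∞(S, X)) :
    Summable fun s => ‖dualCoord F s‖ :=
  summable_of_sum_le (fun _ => norm_nonneg _) (sum_norm_dualCoord_le F)

theorem tsum_norm_dualCoord_le (F : StrongDual ℝ ℓ^∞(S, X)) : ∑' s, ‖dualCoord F s‖ ≤ ‖F‖ :=
  (summable_norm_dualCoord F).tsum_le_of_sum_le (sum_norm_dualCoord_le F)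

theorem norm_dualCoord_apply_le (F : StrongDual ℝ ℓ^∞(S, X)) (g : ℓ^∞(S, X)) (s : S) :
    ‖dualCoord F s (g s)‖ ≤ ‖dualCoord F s‖ * ‖g‖ :=
  (dualCoord F s).le_opNorm_of_le (lp.norm_apply_le_norm ENNReal.top_ne_zero g s)

theorem summable_dualCoord_apply (F : StrongDual ℝ ℓ^∞(S, X)) (g : ℓ^∞(S, X)) :
    Summable fun s => dualCoord F s (g s) :=
  .of_norm_bounded ((summable_norm_dualCoord F).mul_right ‖g‖) (norm_dualCoord_apply_le F g)

noncomputable def c0Part (F : StrongDual ℝ ℓ^∞(S, X)) : StrongDual ℝ ℓ^∞(S, X) :=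
  LinearMap.mkContinuous
    { toFun := fun g => ∑' s, dualCoord F s (g s)
      map_add' := fun g h => by
        simpa only [lp.coeFn_add, Pi.add_apply, map_add] using
          (summable_dualCoord_apply F g).tsum_add (summable_dualCoord_apply F h)
      map_smul' := fun c g => by
        simp only [lp.coeFn_smul, Pi.smul_apply, map_smul, smul_eq_mul, RingHom.id_apply]
        exact tsum_mul_left }
    (∑' s, ‖dualCoord F s‖) fun g => by
      calc ‖∑' s, dualCoord F s (g s)‖ ≤ ∑' s, ‖dualCoord F s‖ * ‖g‖ :=
            tsum_of_norm_bounded ((summable_norm_dualCoord F).mul_right ‖g‖).hasSum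
              (norm_dualCoord_apply_le F g)
        _ = (∑' s, ‖dualCoord F s‖) * ‖g‖ := tsum_mul_right

theorem c0Part_apply (F : StrongDual ℝ ℓ^∞(S, X)) (g : ℓ^∞(S, X)) :
    c0Part F g = ∑' s, dualCoord F s (g s) := rfl

theorem norm_c0Part_le (F : StrongDual ℝ ℓ^∞(S, X)) : ‖c0Part F‖ ≤ ∑' s, ‖dualCoord F s‖ :=
  LinearMap.mkContinuous_norm_le _ (tsum_nonneg fun _ => norm_nonneg _) _

theorem c0Part_single (F : StrongDual ℝ ℓ^∞(S, X)) (s : S) (x : X) :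
    c0Part F (lp.single ∞ s x) = dualCoord F s x := by
  rw [c0Part_apply, tsum_eq_single s fun t ht => by
    rw [lp.single_apply_ne _ _ _ ht, map_zero], lp.single_apply_self]

theorem dualCoord_c0Part (F : StrongDual ℝ ℓ^∞(S, X)) : dualCoord (c0Part F) = dualCoord F := by
  ext s x
  exact c0Part_single F s x

theorem c0Part_c0Part (F : StrongDual ℝ ℓ^∞(S, X)) : c0Part (c0Part F) = c0Part F := by
  ext g
  simp only [c0Part_apply, dualCoord_c0Part]

theorem c0Part_apply_of_finite_setOf_le_norm (F : StrongDual ℝ ℓ^∞(S, X)) {g : ℓ^∞(S, X)}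
    (hg : ∀ ε : ℝ, 0 < ε → {s : S | ε ≤ ‖g s‖}.Finite) : c0Part F g = F g :=
  ((hasSum_single_of_finite_setOf_le_norm hg).mapL F).tsum_eq

theorem c0Part_eq_zero_iff (F : StrongDual ℝ ℓ^∞(S, X)) :
    c0Part F = 0 ↔ ∀ g : ℓ^∞(S, X), (∀ ε : ℝ, 0 < ε → {s : S | ε ≤ ‖g s‖}.Finite) → F g = 0 := by
  refine ⟨fun hF g hg => ?_, fun hF => ?_⟩
  · rw [← c0Part_apply_of_finite_setOf_le_norm F hg, hF, zero_apply]
  · ext g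
    simp [c0Part_apply, hF _ (finite_setOf_le_norm_single _ _)]

theorem tsum_norm_dualCoord_add_norm_sub_c0Part_le (F : StrongDual ℝ ℓ^∞(S, X)) :
    ∑' s, ‖dualCoord F s‖ + ‖F - c0Part F‖ ≤ ‖F‖ := by
  suffices ∀ g : ℓ^∞(S, X), ‖g‖ ≤ 1 → (F - c0Part F) g ≤ ‖F‖ - ∑' s, ‖dualCoord F s‖ by
    linarith [ContinuousLinearMap.opNorm_le_of_forall_apply_le this]
  intro g hg
  have hlim : Tendsto (fun T : Finset S => ∑ s ∈ T, ‖dualCoord F s‖ + F (zeroOn T g)) atTop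
      (𝓝 (∑' s, ‖dualCoord F s‖ + (F g - c0Part F g))) := by
    simp only [apply_zeroOn]
    exact Tendsto.add (summable_norm_dualCoord F).hasSum
      (tendsto_const_nhds.sub (summable_dualCoord_apply F g).hasSum)
  have hle := le_of_tendsto' hlim fun T => sum_norm_dualCoord_add_apply_le F T
    ((norm_zeroOn_le T g).trans hg) fun s hs => by simp [zeroOn_apply, hs]
  rw [sub_apply]
  linarith

theorem norm_eq_norm_c0Part_add_norm_sub (F : StrongDual ℝ ℓ^∞(S, X)) :
    ‖F‖ = ‖c0Part F‖ + ‖F - c0Part F‖ :=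
  le_antisymm (by simpa using norm_add_le (c0Part F) (F - c0Part F))
    (by linarith [norm_c0Part_le F, tsum_norm_dualCoord_add_norm_sub_c0Part_le F])

noncomputable def c0Projection : StrongDual ℝ ℓ^∞(S, X) →L[ℝ] StrongDual ℝ ℓ^∞(S, X) :=
  LinearMap.mkContinuous
    { toFun := c0Part
      map_add' := fun F G => by
        ext g
        simpa [c0Part_apply] using
          (summable_dualCoord_apply F g).tsum_add (summable_dualCoord_apply G g)
      map_smul' := fun c F => by
        ext g
        simpa [c0Part_apply] using tsum_mul_left }
    1 fun F => by
      rw [one_mul]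
      exact (norm_c0Part_le F).trans (tsum_norm_dualCoord_le F)

end lp

theorem c0_isMIdeal_in_linfty_general
    (S : Type*)
    (X : Type*) [NormedAddCommGroup X] [NormedSpace ℝ X] :
    ∃ P : StrongDual ℝ (lp (fun _ : S => X) ⊤) →L[ℝ] StrongDual ℝ (lp (fun _ : S => X) ⊤),
      (∀ F, P (P F) = P F) ∧
      (∀ F : StrongDual ℝ (lp (fun _ : S => X) ⊤),
        P F = 0 ↔ ∀ g : lp (fun _ : S => X) ⊤,
          (∀ ε : ℝ, 0 < ε → {s : S | ε ≤ ‖g s‖}.Finite) → F g = 0) ∧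
      (∀ F : StrongDual ℝ (lp (fun _ : S => X) ⊤), ‖F‖ = ‖P F‖ + ‖F - P F‖) := by
  classical
  exact ⟨lp.c0Projection, lp.c0Part_c0Part, lp.c0Part_eq_zero_iff,
    lp.norm_eq_norm_c0Part_add_norm_sub⟩

/-- **`c₀(S, X)` is an M-ideal in `ℓ^∞(S, X)`.**  For a nonempty (discrete) index set `S` and
a Banach space `X`, there is a projection `P` on `ℓ^∞(S, X)*` whose kernel is the annihilator
of `c₀(S, X)` (the bounded functions `g` with `{s | ε ≤ ‖g s‖}` finite for every `ε > 0`) and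
such that `‖F‖ = ‖P F‖ + ‖F - P F‖` for every `F ∈ ℓ^∞(S, X)*`. -/
theorem c0_isMIdeal_in_linfty
    (S : Type*) [Nonempty S]
    (X : Type*) [NormedAddCommGroup X] [NormedSpace ℝ X] [CompleteSpace X] :
    ∃ P : StrongDual ℝ (lp (fun _ : S => X) ⊤) →L[ℝ] StrongDual ℝ (lp (fun _ : S => X) ⊤),
      (∀ F, P (P F) = P F) ∧
      (∀ F : StrongDual ℝ (lp (fun _ : S => X) ⊤),
        P F = 0 ↔ ∀ g : lp (fun _ : S => X) ⊤,
          (∀ ε : ℝ, 0 < ε → {s : S | ε ≤ ‖g s‖}.Finite) → F g = 0) ∧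
      (∀ F : StrongDual ℝ (lp (fun _ : S => X) ⊤), ‖F‖ = ‖P F‖ + ‖F - P F‖) :=
  c0_isMIdeal_in_linfty_general S X
end

section
/- Let X be a Banach space such that X* has the Radon–Nikodym property, Ω a compact Hausdorff space, and F a nonzero bounded linear functional on C(Ω, X) represented by F = h d|F|, where |F| is the total variation measure of the associated X*-valued regular Borel measure and h: Ω → X* is Borel measurable with ‖h(ω)‖ = 1 for |F|-almost every ω. Then F attains its norm on the unit sphere of C(Ω, X) if and only if there exists g in the unit sphere of C(Ω, X) with h(ω)(g(ω)) = 1 for |F|-almost every ω. -/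
/-!
Through the representation, `F f = ‖F‖` says `∫ h(f) dμ = μ(Ω)`. For `‖f‖ = 1` the
integrand is at most `1` almost everywhere, so this equality holds exactly when `h(f) = 1`
almost everywhere.
-/

open MeasureTheory

theorem Measurable.clm_apply_of_stronglyMeasurable {α 𝕜 E F : Type*} [MeasurableSpace α]
    [NontriviallyNormedField 𝕜] [NormedAddCommGroup E] [NormedSpace 𝕜 E]
    [NormedAddCommGroup F] [NormedSpace 𝕜 F] [MeasurableSpace F] [BorelSpace F]
    {φ : α → E →L[𝕜] F} (hφ : Measurable φ) {f : α → E} (hf : StronglyMeasurable f) :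
    Measurable fun a => φ a (f a) :=
  measurable_of_tendsto_metrizable
    (fun n => (hf.approx n).measurable_bind (fun v a => φ a v) hφ.apply_continuousLinearMap)
    (tendsto_pi_nhds.2 fun a => ((φ a).continuous.tendsto _).comp (hf.tendsto_approx a))

theorem ContinuousMap.stronglyMeasurable_coe {Ω X : Type*} [TopologicalSpace Ω] [CompactSpace Ω]
    [MeasurableSpace Ω] [OpensMeasurableSpace Ω] [NormedAddCommGroup X] (f : C(Ω, X)) :
    StronglyMeasurable f :=
  f.continuous.stronglyMeasurable_of_hasCompactSupport (.of_compactSpace f)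

section DualPairing

variable {Ω : Type*} [TopologicalSpace Ω] [CompactSpace Ω] [MeasurableSpace Ω]
  {X : Type*} [NormedAddCommGroup X] [NormedSpace ℝ X] {μ : Measure Ω} {h : Ω → StrongDual ℝ X}

theorem ae_apply_le_norm_of_ae_norm_le_one (hh : ∀ᵐ ω ∂μ, ‖h ω‖ ≤ 1) (f : C(Ω, X)) :
    ∀ᵐ ω ∂μ, ‖h ω (f ω)‖ ≤ ‖f‖ := by
  filter_upwards [hh] with ω hω
  calc ‖h ω (f ω)‖ ≤ ‖h ω‖ * ‖f ω‖ := (h ω).le_opNorm (f ω)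
    _ ≤ 1 * ‖f‖ := by gcongr; exact f.norm_coe_le_norm ω
    _ = ‖f‖ := one_mul _

theorem integrable_apply_of_ae_norm_le_one [OpensMeasurableSpace Ω] [IsFiniteMeasure μ]
    (hmeas : Measurable h) (hh : ∀ᵐ ω ∂μ, ‖h ω‖ ≤ 1) (f : C(Ω, X)) :
    Integrable (fun ω => h ω (f ω)) μ :=
  .mono' (integrable_const ‖f‖)
    (hmeas.clm_apply_of_stronglyMeasurable f.stronglyMeasurable_coe).aestronglyMeasurable
    (ae_apply_le_norm_of_ae_norm_le_one hh f)

theorem integral_apply_eq_measureReal_univ_iff [OpensMeasurableSpace Ω] [IsFiniteMeasure μ]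
    (hmeas : Measurable h) (hh : ∀ᵐ ω ∂μ, ‖h ω‖ ≤ 1) {f : C(Ω, X)} (hf : ‖f‖ ≤ 1) :
    ∫ ω, h ω (f ω) ∂μ = μ.real Set.univ ↔ ∀ᵐ ω ∂μ, h ω (f ω) = 1 := by
  have hle : (fun ω => h ω (f ω)) ≤ᵐ[μ] 1 := by
    filter_upwards [ae_apply_le_norm_of_ae_norm_le_one hh f] with ω hω
    exact (le_abs_self _).trans (hω.trans hf)
  have key := integral_eq_iff_of_ae_le (integrable_apply_of_ae_norm_le_one hmeas hh f)
    (integrable_const 1) hle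
  rwa [integral_const, smul_eq_mul, mul_one] at key

end DualPairing

theorem phelps_vector_valued_general
    {Ω : Type*} [TopologicalSpace Ω] [CompactSpace Ω]
    [MeasurableSpace Ω] [BorelSpace Ω]
    {X : Type*} [NormedAddCommGroup X] [NormedSpace ℝ X]
    (μ : Measure Ω) [IsFiniteMeasure μ]
    (h : Ω → StrongDual ℝ X) (hmeas : Measurable h)
    (hone : ∀ᵐ ω ∂μ, ‖h ω‖ = 1)
    (F : StrongDual ℝ C(Ω, X))
    (hrep : ∀ f : C(Ω, X), F f = ∫ ω, (h ω) (f ω) ∂μ)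
    (hFnorm : ‖F‖ = (μ Set.univ).toReal) :
    (∃ f : C(Ω, X), ‖f‖ = 1 ∧ F f = ‖F‖) ↔
      (∃ g : C(Ω, X), ‖g‖ = 1 ∧ ∀ᵐ ω ∂μ, (h ω) (g ω) = 1) := by
  have hle : ∀ᵐ ω ∂μ, ‖h ω‖ ≤ 1 := hone.mono fun _ hω => hω.le
  refine exists_congr fun f => and_congr_right fun hf => ?_
  rw [hrep, hFnorm]
  exact integral_apply_eq_measureReal_univ_iff hmeas hle hf.le

/-- **Vector-valued Phelps theorem.**  Let `X` be a Banach space (with `X*` having the RNP,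
which provides the representation below), `Ω` a compact Hausdorff space, and `F` a nonzero
bounded linear functional on `C(Ω, X)` represented as `F = h d|F|`: here `μ = |F|` is the
(finite, regular Borel) total variation measure, `h : Ω → X*` is Borel measurable with
`‖h ω‖ = 1` for `μ`-a.e. `ω`, `F f = ∫ h ω (f ω) dμ` for all `f ∈ C(Ω, X)`, and
`‖F‖ = μ(Ω)`.  Then `F` attains its norm on the unit sphere of `C(Ω, X)` iff there exists
`g` in the unit sphere of `C(Ω, X)` with `h(ω)(g(ω)) = 1` for `μ`-a.e. `ω`. -/
theorem phelps_vector_valued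
    {Ω : Type*} [TopologicalSpace Ω] [CompactSpace Ω] [T2Space Ω]
    [MeasurableSpace Ω] [BorelSpace Ω]
    {X : Type*} [NormedAddCommGroup X] [NormedSpace ℝ X] [CompleteSpace X]
    (μ : Measure Ω) [IsFiniteMeasure μ] [μ.Regular] (hμ : μ ≠ 0)
    (h : Ω → StrongDual ℝ X) (hmeas : Measurable h)
    (hone : ∀ᵐ ω ∂μ, ‖h ω‖ = 1)
    (F : StrongDual ℝ C(Ω, X))
    (hrep : ∀ f : C(Ω, X), F f = ∫ ω, (h ω) (f ω) ∂μ)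
    (hFnorm : ‖F‖ = (μ Set.univ).toReal) :
    (∃ f : C(Ω, X), ‖f‖ = 1 ∧ F f = ‖F‖) ↔
      (∃ g : C(Ω, X), ‖g‖ = 1 ∧ ∀ᵐ ω ∂μ, (h ω) (g ω) = 1) :=
  phelps_vector_valued_general μ h hmeas hone F hrep hFnorm
end

section
/- Let X be a Banach space such that X* has the Radon–Nikodym property, and let F ∈ C(Ω, X)* with Radon–Nikodym derivative h: Ω → X* of F with respect to its total variation |F| (so F = h d|F| as an X*-valued measure). Then F(f) = ∫_Ω h(ω)(f(ω)) d|F|(ω) for all f ∈ C(Ω, X). -/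
/-!
Both sides are continuous linear functionals of `f`, the right-hand one being bounded by
`(∫ ‖h‖ dμ) ‖f‖`, and they agree on the functions `ω ↦ φ(ω) • x` by hypothesis. These span a
dense subspace of `C(Ω, X)`: if `f` oscillates by at most `ε` on each set of a finite open cover
`Uᵢ ∋ cᵢ`, a subordinate partition of unity `ρ` gives `‖f - ∑ᵢ ρᵢ • f(cᵢ)‖ ≤ ε`.
-/

open MeasureTheory Set

namespace ContinuousMap

theorem dense_span_smul_const {Ω X : Type*} [TopologicalSpace Ω] [CompactSpace Ω] [T2Space Ω]
    [NormedAddCommGroup X] [NormedSpace ℝ X] :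
    Dense (Submodule.span ℝ (range fun p : C(Ω, ℝ) × X => p.1 • const Ω p.2) : Set C(Ω, X)) := by
  refine fun f => Metric.mem_closure_iff.2 fun ε hε => ?_
  set U : Ω → Set Ω := fun c => f ⁻¹' Metric.ball (f c) (ε / 2)
  have hU : ∀ c, IsOpen (U c) := fun c => Metric.isOpen_ball.preimage f.continuous
  obtain ⟨t, ht⟩ := isCompact_univ.elim_finite_subcover U hU fun ω _ =>
    mem_iUnion.2 ⟨ω, Metric.mem_ball_self (half_pos hε)⟩
  obtain ⟨ρ, hρ⟩ := PartitionOfUnity.exists_isSubordinate isClosed_univ (fun i : t => U i)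
    (fun i => hU i) (by simpa [iUnion_subtype] using ht)
  refine ⟨∑ i : t, ρ i • const Ω (f i),
    Submodule.sum_mem _ fun i _ => Submodule.subset_span ⟨(ρ i, f i), rfl⟩, ?_⟩
  refine ((dist_le (half_pos hε).le).2 fun ω => ?_).trans_lt (half_lt_self hε)
  have hmem : ∑ᶠ i, ρ i ω • f i ∈ Metric.closedBall (f ω) (ε / 2) := by
    refine ρ.finsum_smul_mem_convex (g := fun i _ => f i) (mem_univ ω) (fun i hi => ?_)
      (convex_closedBall _ _)
    have hωU : ω ∈ U i := hρ i (subset_tsupport _ hi)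
    exact Metric.mem_closedBall_comm.1 (Metric.mem_ball.1 hωU).le
  simpa [finsum_eq_sum_of_fintype, dist_comm] using hmem

end ContinuousMap

namespace MeasureTheory.Integrable

variable {Ω X E : Type*} [TopologicalSpace Ω] [CompactSpace Ω] [MeasurableSpace Ω]
  [OpensMeasurableSpace Ω] [NormedAddCommGroup X] [NormedSpace ℝ X] [NormedAddCommGroup E]
  [NormedSpace ℝ E] {μ : Measure Ω} {h : Ω → X →L[ℝ] E}

theorem apply_continuousMap (hint : Integrable h μ) (f : C(Ω, X)) :
    Integrable (fun ω => h ω (f ω)) μ := by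
  refine (hint.norm.mul_const ‖f‖).mono'
    ((ContinuousLinearMap.apply ℝ E).aestronglyMeasurable_comp₂
      f.continuous.aestronglyMeasurable_of_compactSpace hint.aestronglyMeasurable) ?_
  filter_upwards with ω
  exact (h ω).le_of_opNorm_le_of_le le_rfl (f.norm_coe_le_norm ω)

noncomputable def continuousMapPairing (hint : Integrable h μ) : C(Ω, X) →L[ℝ] E :=
  LinearMap.mkContinuous
    { toFun := fun f => ∫ ω, h ω (f ω) ∂μ
      map_add' := fun f g => by
        simpa using integral_add (hint.apply_continuousMap f) (hint.apply_continuousMap g)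
      map_smul' := fun c f => by simpa using MeasureTheory.integral_smul c (fun ω => h ω (f ω)) }
    (∫ ω, ‖h ω‖ ∂μ) fun f => calc
      ‖∫ ω, h ω (f ω) ∂μ‖ ≤ ∫ ω, ‖h ω‖ * ‖f‖ ∂μ :=
        norm_integral_le_of_norm_le (hint.norm.mul_const _) <| .of_forall fun ω =>
          (h ω).le_of_opNorm_le_of_le le_rfl (f.norm_coe_le_norm ω)
      _ = (∫ ω, ‖h ω‖ ∂μ) * ‖f‖ := integral_mul_const _ _

@[simp]
theorem continuousMapPairing_apply (hint : Integrable h μ) (f : C(Ω, X)) :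
    hint.continuousMapPairing f = ∫ ω, h ω (f ω) ∂μ :=
  rfl

end MeasureTheory.Integrable

theorem dual_action_eq_integral_of_density_general
    {Ω : Type*} [TopologicalSpace Ω] [CompactSpace Ω] [T2Space Ω]
    [MeasurableSpace Ω] [BorelSpace Ω]
    {X : Type*} [NormedAddCommGroup X] [NormedSpace ℝ X]
    (μ : Measure Ω)
    (h : Ω → StrongDual ℝ X) (hint : Integrable h μ)
    (F : StrongDual ℝ C(Ω, X))
    (hrep : ∀ (f : C(Ω, ℝ)) (x : X),
      F ⟨fun ω => f ω • x, (f.continuous.smul continuous_const)⟩ =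
        ∫ ω, f ω * (h ω) x ∂μ) :
    ∀ f : C(Ω, X), F f = ∫ ω, (h ω) (f ω) ∂μ := by
  have hF : F = hint.continuousMapPairing :=
    ContinuousLinearMap.ext_on ContinuousMap.dense_span_smul_const <| by
      rintro _ ⟨⟨φ, x⟩, rfl⟩
      refine (hrep φ x).trans ?_
      simp
  simp [hF]

/-- **Action of a representing measure on `C(Ω, X)`.**  Let `X*` have the RNP and let
`F ∈ C(Ω, X)*` correspond to an `X*`-valued regular Borel measure with total variation
`μ = |F|` and Radon–Nikodym derivative `h : Ω → X*` (Bochner integrable, `‖h ω‖ = 1`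
`μ`-a.e.); on elementary tensors `x ⊗ f` (`ω ↦ f(ω) • x`, whose span is dense in
`C(Ω, X)`) this means `F(x ⊗ f) = ∫ f(ω) h(ω)(x) dμ`.  Then
`F f = ∫ h(ω)(f(ω)) dμ` for every `f ∈ C(Ω, X)`. -/
theorem dual_action_eq_integral_of_density
    {Ω : Type*} [TopologicalSpace Ω] [CompactSpace Ω] [T2Space Ω]
    [MeasurableSpace Ω] [BorelSpace Ω]
    {X : Type*} [NormedAddCommGroup X] [NormedSpace ℝ X] [CompleteSpace X]
    (μ : Measure Ω) [IsFiniteMeasure μ] [μ.Regular]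
    (h : Ω → StrongDual ℝ X) (hint : Integrable h μ)
    (hone : ∀ᵐ ω ∂μ, ‖h ω‖ = 1)
    (F : StrongDual ℝ C(Ω, X))
    (hrep : ∀ (f : C(Ω, ℝ)) (x : X),
      F ⟨fun ω => f ω • x, (f.continuous.smul continuous_const)⟩ =
        ∫ ω, f ω * (h ω) x ∂μ) :
    ∀ f : C(Ω, X), F f = ∫ ω, (h ω) (f ω) ∂μ :=
  dual_action_eq_integral_of_density_general μ h hint F hrep
end
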